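/- arXiv:2605.15898 — 9 statements merged into one kernel-verified Lean document; each statement's English description precedes it below -/
import Mathlib

section
/- Let X be a smooth complex Banach space with duality map J, and let T be a self-adjoint operator on X (T'∘J = J∘T) such that ‖T‖²I − T² is strongly normal (i.e., equals S² for some self-adjoint S). Then T attains its norm if and only if ‖T‖ or −‖T‖ is an eigenvalue of T. -/
/-- Self-adjointness on a smooth Banach space: `T' ∘ J = J ∘ T`. -/
def IsSelfAdj {X : Type*} [NormedAddCommGroup X] [NormedSpace ℂ X]
    (J : X → (X →L[ℂ] ℂ)) (T : X →L[ℂ] X) : Prop :=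
  ∀ x : X, J (T x) = (J x).comp T

/-- For self-adjoint T with ‖T‖²I − T² strongly normal,
T attains its norm iff ‖T‖ or −‖T‖ is an eigenvalue of T. -/
theorem norm_attained_iff_eigenvalue
    {X : Type*} [NormedAddCommGroup X] [NormedSpace ℂ X] [CompleteSpace X]
    (J : X → (X →L[ℂ] ℂ))
    (hJnorm : ∀ x : X, ‖J x‖ = ‖x‖)
    (hJx : ∀ x : X, J x x = (‖x‖ : ℂ) ^ 2)
    (T : X →L[ℂ] X) (hT : IsSelfAdj J T)
    (hSN : ∃ S : X →L[ℂ] X, IsSelfAdj J S ∧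
      ((‖T‖ : ℂ) ^ 2) • (1 : X →L[ℂ] X) - T ^ 2 = S ^ 2) :
    (∃ x : X, ‖x‖ = 1 ∧ ‖T x‖ = ‖T‖) ↔
      ((∃ x : X, x ≠ 0 ∧ T x = (‖T‖ : ℂ) • x) ∨
       (∃ x : X, x ≠ 0 ∧ T x = (-(‖T‖ : ℝ) : ℂ) • x)) := by
  constructor
  · rintro ⟨x₀, hx1, hx2⟩
    obtain ⟨S, hS, hSeq⟩ := hSN
    set c : ℂ := (‖T‖ : ℂ) with hc
    -- J x₀ (T (T x₀)) = c ^ 2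
    have h2 : J x₀ (T (T x₀)) = c ^ 2 := by
      have := congrArg (fun f => f (T x₀)) (hT x₀)
      simp only [ContinuousLinearMap.comp_apply] at this
      rw [← this, hJx, hx2]
    have h3 : J x₀ x₀ = 1 := by rw [hJx, hx1]; norm_num
    -- apply the strongly-normal equation at x₀
    have heq : c ^ 2 • x₀ - T (T x₀) = S (S x₀) := by
      have := congrArg (fun f => f x₀) hSeq
      simpa [pow_two, ContinuousLinearMap.mul_apply, ContinuousLinearMap.sub_apply,
        ContinuousLinearMap.smul_apply] using this
    -- ‖S x₀‖² = 0
    have hSx : S x₀ = 0 := by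
      have hJS : J x₀ (S (S x₀)) = (‖S x₀‖ : ℂ) ^ 2 := by
        have := congrArg (fun f => f (S x₀)) (hS x₀)
        simp only [ContinuousLinearMap.comp_apply] at this
        rw [← this, hJx]
      have h0 : (‖S x₀‖ : ℂ) ^ 2 = 0 := by
        rw [← hJS, ← heq, map_sub, map_smul, h3, h2, smul_eq_mul]
        ring
      have : (‖S x₀‖ : ℝ) = 0 := by
        have := pow_eq_zero_iff (n := 2) (by norm_num) |>.mp h0
        exact_mod_cast this
      simpa using this
    have hT2 : T (T x₀) = c ^ 2 • x₀ := by
      have h0 : c ^ 2 • x₀ - T (T x₀) = 0 := by rw [heq, hSx, map_zero]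
      exact (sub_eq_zero.mp h0).symm
    by_cases hy : T x₀ + c • x₀ = 0
    · right
      refine ⟨x₀, fun h => by simp [h] at hx1, ?_⟩
      rw [eq_neg_of_add_eq_zero_left hy, ← neg_smul, hc, ← Complex.ofReal_neg]
    · left
      refine ⟨T x₀ + c • x₀, hy, ?_⟩
      rw [map_add, map_smul, hT2, smul_add, smul_smul, ← pow_two]
      abel
  · rintro (⟨x, hx, hTx⟩ | ⟨x, hx, hTx⟩) <;>
    · have hxn : ‖x‖ ≠ 0 := norm_ne_zero_iff.mpr hx
      refine ⟨((‖x‖ : ℂ))⁻¹ • x, ?_, ?_⟩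
      · rw [norm_smul]
        simp [hxn]
      · rw [map_smul, hTx, smul_comm, norm_smul, norm_smul]
        simp [hxn, abs_of_nonneg (norm_nonneg T)]
end

section
/- Let X be a smooth complex Banach space and T a self-adjoint operator on X such that T² − μ(T)²I is strongly normal. Then T attains its minimum modulus if and only if μ(T) or −μ(T) is an eigenvalue of T. -/
/-- The minimum modulus μ(T) = inf{‖Tx‖ : ‖x‖ = 1}. -/
noncomputable def minMod {X : Type*} [NormedAddCommGroup X] [NormedSpace ℂ X]
    (T : X →L[ℂ] X) : ℝ :=
  sInf {r : ℝ | ∃ x : X, ‖x‖ = 1 ∧ r = ‖T x‖}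

/-- For self-adjoint T with T² − μ(T)²I strongly normal,
T attains its minimum modulus iff μ(T) or −μ(T) is an eigenvalue of T. -/
theorem minMod_attained_iff_eigenvalue
    {X : Type*} [NormedAddCommGroup X] [NormedSpace ℂ X] [CompleteSpace X]
    (J : X → (X →L[ℂ] ℂ))
    (hJnorm : ∀ x : X, ‖J x‖ = ‖x‖)
    (hJx : ∀ x : X, J x x = (‖x‖ : ℂ) ^ 2)
    (T : X →L[ℂ] X) (hT : IsSelfAdj J T)
    (hSN : ∃ S : X →L[ℂ] X, IsSelfAdj J S ∧
      T ^ 2 - ((minMod T : ℂ) ^ 2) • (1 : X →L[ℂ] X) = S ^ 2) :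
    (∃ x : X, ‖x‖ = 1 ∧ ‖T x‖ = minMod T) ↔
      ((∃ x : X, x ≠ 0 ∧ T x = (minMod T : ℂ) • x) ∨
       (∃ x : X, x ≠ 0 ∧ T x = (-(minMod T) : ℂ) • x)) := by
  have hμ0 : 0 ≤ minMod T := by
    apply Real.sInf_nonneg
    rintro r ⟨x, hx, rfl⟩
    positivity
  constructor
  · rintro ⟨x, hx1, hTx⟩
    obtain ⟨S, hS, hSeq⟩ := hSN
    -- S² x = T(Tx) - μ² x
    have hS2x : S (S x) = T (T x) - ((minMod T : ℂ) ^ 2) • x := by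
      have h := congrArg (fun A : X →L[ℂ] X => A x) hSeq
      simpa [pow_two, ContinuousLinearMap.mul_apply, ContinuousLinearMap.sub_apply,
        ContinuousLinearMap.smul_apply, ContinuousLinearMap.one_apply] using h.symm
    -- J x (T (T x)) = μ²
    have hJT2 : J x (T (T x)) = (minMod T : ℂ) ^ 2 := by
      have h1 := congrArg (fun f : X →L[ℂ] ℂ => f (T x)) (hT x)
      simp only [ContinuousLinearMap.comp_apply] at h1
      rw [hJx (T x), hTx] at h1
      exact h1.symm
    -- S x = 0
    have hSx0 : S x = 0 := by
      have h2 := congrArg (fun f : X →L[ℂ] ℂ => f (S x)) (hS x)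
      simp only [ContinuousLinearMap.comp_apply] at h2
      rw [hJx (S x), hS2x, map_sub, map_smul, hJT2, hJx x, hx1] at h2
      simp only [Complex.ofReal_one, one_pow, smul_eq_mul, mul_one, sub_self] at h2
      have hn : ‖S x‖ = 0 := by
        have h3 : (‖S x‖ : ℂ) ^ 2 = 0 := h2
        have h4 : (‖S x‖ : ℂ) = 0 := pow_eq_zero_iff (n := 2) (by norm_num) |>.mp h3
        exact_mod_cast h4
      simpa [norm_eq_zero] using hn
    -- T (T x) = μ² x
    have hT2x : T (T x) = ((minMod T : ℂ) ^ 2) • x := by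
      rw [hSx0, map_zero] at hS2x
      exact sub_eq_zero.mp hS2x.symm
    by_cases hy : T x + (minMod T : ℂ) • x = 0
    · right
      refine ⟨x, by simp [← norm_ne_zero_iff, hx1], ?_⟩
      have hx' : T x = -((minMod T : ℂ) • x) := eq_neg_of_add_eq_zero_left hy
      rw [hx']
      push_cast
      module
    · left
      refine ⟨T x + (minMod T : ℂ) • x, hy, ?_⟩
      rw [map_add, map_smul, hT2x]
      module
  · rintro (⟨x, hx0, hx⟩ | ⟨x, hx0, hx⟩) <;>
    · have hxn : ‖x‖ ≠ 0 := norm_ne_zero_iff.mpr hx0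
      refine ⟨(‖x‖ : ℂ)⁻¹ • x, ?_, ?_⟩
      · simp [norm_smul, abs_of_nonneg (norm_nonneg x), inv_mul_cancel₀ hxn]
      · rw [map_smul, hx]
        simp [norm_smul, abs_of_nonneg hμ0, abs_of_nonneg (norm_nonneg x)]
        field_simp
end

section
/- Let X be a smooth complex Banach space and T ∈ B(X) such that T − c(T)I is strongly normal. Then the minimum modulus of T equals its Crawford number: μ(T) = c(T). -/
/-- The Crawford number c(T) = inf{ |J(x)(Tx)| : ‖x‖ = 1 }. -/
noncomputable def crawford {X : Type*} [NormedAddCommGroup X] [NormedSpace ℂ X]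
    (J : X → (X →L[ℂ] ℂ)) (T : X →L[ℂ] X) : ℝ :=
  sInf {r : ℝ | ∃ x : X, ‖x‖ = 1 ∧ r = ‖J x (T x)‖}

/-- If T − c(T)I is strongly normal, then μ(T) = c(T). -/
theorem minMod_eq_crawford
    {X : Type*} [NormedAddCommGroup X] [NormedSpace ℂ X] [CompleteSpace X]
    (J : X → (X →L[ℂ] ℂ))
    (hJnorm : ∀ x : X, ‖J x‖ = ‖x‖)
    (hJx : ∀ x : X, J x x = (‖x‖ : ℂ) ^ 2)
    (T : X →L[ℂ] X)
    (hSN : ∃ S : X →L[ℂ] X, IsSelfAdj J S ∧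
      T - (crawford J T : ℂ) • (1 : X →L[ℂ] X) = S ^ 2) :
    minMod T = crawford J T := by
  by_cases hX : ∃ u : X, ‖u‖ = 1
  · obtain ⟨u, hu⟩ := hX
    obtain ⟨S, hS, hT⟩ := hSN
    set c := crawford J T with hc
    have hCne : {r : ℝ | ∃ x : X, ‖x‖ = 1 ∧ r = ‖J x (T x)‖}.Nonempty :=
      ⟨‖J u (T u)‖, u, hu, rfl⟩
    have hCbdd : BddBelow {r : ℝ | ∃ x : X, ‖x‖ = 1 ∧ r = ‖J x (T x)‖} :=
      ⟨0, by rintro r ⟨x, hx, rfl⟩; positivity⟩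
    have hMne : {r : ℝ | ∃ x : X, ‖x‖ = 1 ∧ r = ‖T x‖}.Nonempty :=
      ⟨‖T u‖, u, hu, rfl⟩
    have hMbdd : BddBelow {r : ℝ | ∃ x : X, ‖x‖ = 1 ∧ r = ‖T x‖} :=
      ⟨0, by rintro r ⟨x, hx, rfl⟩; positivity⟩
    have hc0 : 0 ≤ c := by
      apply Real.sInf_nonneg
      rintro r ⟨x, hx, rfl⟩; positivity
    have hTx : ∀ x : X, T x = S (S x) + (c : ℂ) • x := by
      intro x
      have h := congrArg (fun A : X →L[ℂ] X => A x) hT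
      simp only [ContinuousLinearMap.sub_apply, ContinuousLinearMap.smul_apply,
        ContinuousLinearMap.one_apply, sq, ContinuousLinearMap.mul_apply] at h
      linear_combination (norm := module) h
    have key : ∀ x : X, ‖x‖ = 1 → ‖J x (T x)‖ = ‖S x‖ ^ 2 + c := by
      intro x hx
      have h1 : J x (S (S x)) = (‖S x‖ : ℂ) ^ 2 := by
        have h2 := congrArg (fun f : X →L[ℂ] ℂ => f (S x)) (hS x)
        simp only [ContinuousLinearMap.comp_apply] at h2
        rw [← h2, hJx]
      have : J x (T x) = ((‖S x‖ ^ 2 + c : ℝ) : ℂ) := by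
        rw [hTx x]
        rw [map_add, h1, (J x).map_smul, hJx x, hx]
        rw [smul_eq_mul]
        push_cast
        ring
      rw [this, Complex.norm_real, Real.norm_of_nonneg (by positivity)]
    -- c ≤ minMod
    have h1 : c ≤ minMod T := by
      apply le_csInf hMne
      rintro r ⟨x, hx, rfl⟩
      have hle : c ≤ ‖J x (T x)‖ := csInf_le hCbdd ⟨x, hx, rfl⟩
      calc c ≤ ‖J x (T x)‖ := hle
        _ ≤ ‖J x‖ * ‖T x‖ := (J x).le_opNorm (T x)
        _ = ‖T x‖ := by rw [hJnorm, hx, one_mul]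
    -- minMod ≤ c
    have h2 : minMod T ≤ c := by
      apply le_of_forall_pos_le_add
      intro δ hδ
      have hεpos : 0 < (δ / (‖S‖ + 1)) ^ 2 := by positivity
      have hlt : c < c + (δ / (‖S‖ + 1)) ^ 2 := by linarith
      obtain ⟨r, ⟨x, hx, rfl⟩, hr⟩ := exists_lt_of_csInf_lt hCne (by
        rw [hc] at hlt; exact hlt)
      rw [key x hx] at hr
      have hSx2 : ‖S x‖ ^ 2 < (δ / (‖S‖ + 1)) ^ 2 := by linarith
      have hSx : ‖S x‖ < δ / (‖S‖ + 1) :=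
        lt_of_pow_lt_pow_left₀ 2 (by positivity) hSx2
      have hTle : ‖T x‖ ≤ c + δ := by
        rw [hTx x]
        calc ‖S (S x) + (c : ℂ) • x‖ ≤ ‖S (S x)‖ + ‖(c : ℂ) • x‖ := norm_add_le _ _
          _ ≤ ‖S‖ * ‖S x‖ + c := by
              rw [norm_smul, hx, mul_one, Complex.norm_real,
                Real.norm_of_nonneg hc0]
              gcongr
              exact S.le_opNorm _
          _ ≤ c + δ := by
              have h3 : ‖S‖ * ‖S x‖ ≤ (‖S‖ + 1) * ‖S x‖ := by
                have := norm_nonneg (S x); nlinarith [norm_nonneg S]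
              have h4 : (‖S‖ + 1) * ‖S x‖ < δ := by
                have hpos : 0 < ‖S‖ + 1 := by positivity
                calc (‖S‖ + 1) * ‖S x‖ < (‖S‖ + 1) * (δ / (‖S‖ + 1)) := by
                      gcongr
                  _ = δ := by field_simp
              linarith
      calc minMod T ≤ ‖T x‖ := csInf_le hMbdd ⟨x, hx, rfl⟩
        _ ≤ c + δ := hTle
    linarith
  · push_neg at hX
    have h1 : {r : ℝ | ∃ x : X, ‖x‖ = 1 ∧ r = ‖T x‖} = ∅ := by
      ext r; simp only [Set.mem_setOf_eq, Set.mem_empty_iff_false, iff_false]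
      rintro ⟨x, hx, -⟩; exact hX x hx
    have h2 : {r : ℝ | ∃ x : X, ‖x‖ = 1 ∧ r = ‖J x (T x)‖} = ∅ := by
      ext r; simp only [Set.mem_setOf_eq, Set.mem_empty_iff_false, iff_false]
      rintro ⟨x, hx, -⟩; exact hX x hx
    rw [minMod, crawford, h1, h2]
end

section
/- Let X be a smooth complex Banach space and T ∈ B(X) a strongly normal operator with Crawford number c(T) = 0. Then the minimum modulus satisfies μ(T) = 0. -/
/-- If T is strongly normal and c(T) = 0, then μ(T) = 0. -/
theorem minMod_eq_zero_of_crawford_eq_zero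
    {X : Type*} [NormedAddCommGroup X] [NormedSpace ℂ X] [CompleteSpace X]
    (J : X → (X →L[ℂ] ℂ))
    (hJnorm : ∀ x : X, ‖J x‖ = ‖x‖)
    (hJx : ∀ x : X, J x x = (‖x‖ : ℂ) ^ 2)
    (T : X →L[ℂ] X)
    (hSN : ∃ S : X →L[ℂ] X, IsSelfAdj J S ∧ T = S ^ 2)
    (hc : crawford J T = 0) :
    minMod T = 0 := by
  obtain ⟨S, hS, rfl⟩ := hSN
  -- key identity: ‖J x ((S^2) x)‖ = ‖S x‖ ^ 2
  have key : ∀ x : X, ‖J x ((S ^ 2) x)‖ = ‖S x‖ ^ 2 := by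
    intro x
    have h1 : (S ^ 2) x = S (S x) := by
      rw [pow_two, ContinuousLinearMap.mul_apply]
    have h2 : J x ((S ^ 2) x) = J (S x) (S x) := by
      rw [h1, hS x]; rfl
    rw [h2, hJx (S x)]
    rw [← Complex.ofReal_pow, Complex.norm_real, Real.norm_eq_abs]
    exact abs_of_nonneg (by positivity)
  by_cases hne : ∃ x : X, ‖x‖ = 1
  · -- nonempty unit sphere
    have hbdd : BddBelow {r : ℝ | ∃ x : X, ‖x‖ = 1 ∧ r = ‖(S ^ 2) x‖} :=
      ⟨0, by rintro r ⟨x, _, rfl⟩; positivity⟩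
    have hmm_nonneg : 0 ≤ minMod (S ^ 2) := by
      apply Real.sInf_nonneg
      rintro r ⟨x, _, rfl⟩; positivity
    have hle : ∀ ε : ℝ, 0 < ε → minMod (S ^ 2) < ε := by
      intro ε hε
      set ε' : ℝ := (ε / (‖S‖ + 1)) ^ 2 with hε'def
      have hSpos : (0:ℝ) < ‖S‖ + 1 := by positivity
      have hε' : 0 < ε' := by positivity
      have hcs : sInf {r : ℝ | ∃ x : X, ‖x‖ = 1 ∧ r = ‖J x ((S ^ 2) x)‖} < ε' := by
        rw [show sInf {r : ℝ | ∃ x : X, ‖x‖ = 1 ∧ r = ‖J x ((S ^ 2) x)‖} = crawford J (S ^ 2) from rfl, hc]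
        exact hε'
      obtain ⟨r, ⟨x, hx1, hr⟩, hrlt⟩ := exists_lt_of_csInf_lt
        (by obtain ⟨x, hx⟩ := hne; exact ⟨‖J x ((S ^ 2) x)‖, x, hx, rfl⟩) hcs
      have hr0 : 0 ≤ r := hr ▸ norm_nonneg _
      have hSx : ‖S x‖ ^ 2 < ε' := by rw [← key x, ← hr]; exact hrlt
      have hSx' : ‖S x‖ < ε / (‖S‖ + 1) := by
        nlinarith [norm_nonneg (S x), div_pos hε hSpos]
      have hT : ‖(S ^ 2) x‖ < ε := by
        have h1 : (S ^ 2) x = S (S x) := by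
          rw [pow_two, ContinuousLinearMap.mul_apply]
        calc ‖(S ^ 2) x‖ = ‖S (S x)‖ := by rw [h1]
          _ ≤ ‖S‖ * ‖S x‖ := S.le_opNorm _
          _ ≤ (‖S‖ + 1) * ‖S x‖ := by
              have := norm_nonneg (S x); nlinarith
          _ < (‖S‖ + 1) * (ε / (‖S‖ + 1)) := by
              exact mul_lt_mul_of_pos_left hSx' hSpos
          _ = ε := by field_simp
      calc minMod (S ^ 2) ≤ ‖(S ^ 2) x‖ := csInf_le hbdd ⟨x, hx1, rfl⟩
        _ < ε := hT
    by_contra hne0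
    have hpos : 0 < minMod (S ^ 2) := lt_of_le_of_ne hmm_nonneg (Ne.symm hne0)
    exact absurd (hle _ hpos) (lt_irrefl _)
  · -- empty unit sphere
    have : {r : ℝ | ∃ x : X, ‖x‖ = 1 ∧ r = ‖(S ^ 2) x‖} = ∅ := by
      ext r; simp only [Set.mem_setOf_eq, Set.mem_empty_iff_false, iff_false]
      rintro ⟨x, hx, -⟩; exact hne ⟨x, hx⟩
    rw [minMod, this, Real.sInf_empty]
end

section
/- Let X be a smooth complex Banach space and T ∈ B(X) such that T − c(T)I is strongly normal. Then T attains its Crawford number if and only if c(T) is an eigenvalue of T. -/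
/-- If T − c(T)I is strongly normal, then T attains its Crawford
number iff c(T) is an eigenvalue of T. -/
theorem crawford_attained_iff_eigenvalue
    {X : Type*} [NormedAddCommGroup X] [NormedSpace ℂ X] [CompleteSpace X]
    (J : X → (X →L[ℂ] ℂ))
    (hJnorm : ∀ x : X, ‖J x‖ = ‖x‖)
    (hJx : ∀ x : X, J x x = (‖x‖ : ℂ) ^ 2)
    (T : X →L[ℂ] X)
    (hSN : ∃ S : X →L[ℂ] X, IsSelfAdj J S ∧
      T - (crawford J T : ℂ) • (1 : X →L[ℂ] X) = S ^ 2) :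
    (∃ x : X, ‖x‖ = 1 ∧ ‖J x (T x)‖ = crawford J T) ↔
      (∃ x : X, x ≠ 0 ∧ T x = (crawford J T : ℂ) • x) := by
  obtain ⟨S, hS, hT⟩ := hSN
  set c := crawford J T with hc
  have hc0 : 0 ≤ c := Real.sInf_nonneg fun r ⟨x, hx, hr⟩ => hr ▸ norm_nonneg _
  have hTx : ∀ x : X, T x = (c : ℂ) • x + S (S x) := by
    intro x
    have := congrFun (congrArg DFunLike.coe hT) x
    simp only [ContinuousLinearMap.sub_apply, ContinuousLinearMap.smul_apply,
      ContinuousLinearMap.one_apply, pow_two, ContinuousLinearMap.mul_apply] at this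
    linear_combination (norm := module) this
  have key : ∀ x : X, ‖x‖ = 1 → J x (T x) = ((c + ‖S x‖ ^ 2 : ℝ) : ℂ) := by
    intro x hx
    have h1 : J x (S (S x)) = J (S x) (S x) := by rw [hS x]; rfl
    rw [hTx x, map_add, map_smul, hJx x, hx, h1, hJx (S x)]
    push_cast
    simp [smul_eq_mul]
  constructor
  · rintro ⟨x, hx, hval⟩
    refine ⟨x, by simp [← norm_pos_iff, hx], ?_⟩
    rw [key x hx] at hval
    rw [Complex.norm_real, Real.norm_eq_abs, abs_of_nonneg (by positivity)] at hval
    have hSx : S x = 0 := by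
      have : ‖S x‖ ^ 2 = 0 := by linarith
      simpa [pow_eq_zero_iff] using this
    rw [hTx x, hSx, map_zero, add_zero]
  · rintro ⟨x, hx0, hTeq⟩
    refine ⟨‖x‖⁻¹ • x, ?_, ?_⟩
    · simp [norm_smul, norm_ne_zero_iff.mpr hx0]
    · have hy : ‖(‖x‖⁻¹ : ℂ) • x‖ = 1 := by
        simp [norm_smul, norm_ne_zero_iff.mpr hx0]
      have hTy : T ((‖x‖⁻¹ : ℂ) • x) = (c : ℂ) • ((‖x‖⁻¹ : ℂ) • x) := by
        rw [map_smul, hTeq, smul_comm]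
      have : ((‖x‖⁻¹ : ℝ) : ℂ) • x = (‖x‖⁻¹ : ℂ) • x := by norm_cast
      rw [show (‖x‖⁻¹ : ℝ) • x = (‖x‖⁻¹ : ℂ) • x by norm_cast]
      rw [hTy, map_smul, hJx, hy, smul_eq_mul]
      simp [abs_of_nonneg hc0]
end

section
/- Let X be a reflexive smooth complex Banach space and T ∈ B(X) a self-adjoint operator. Then T is invertible if and only if T is bounded below (i.e., there exists c > 0 with ‖Tx‖ ≥ c‖x‖ for all x). -/
/-- A self-adjoint operator on a reflexive smooth complex Banach
space (so the duality map J is surjective) is invertible iff bounded below. -/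
theorem selfAdj_isUnit_iff_bounded_below
    {X : Type*} [NormedAddCommGroup X] [NormedSpace ℂ X] [CompleteSpace X]
    (J : X → (X →L[ℂ] ℂ))
    (hJnorm : ∀ x : X, ‖J x‖ = ‖x‖)
    (hJx : ∀ x : X, J x x = (‖x‖ : ℂ) ^ 2)
    (hJsurj : Function.Surjective J)
    (T : X →L[ℂ] X) (hT : IsSelfAdj J T) :
    IsUnit T ↔ ∃ c : ℝ, 0 < c ∧ ∀ x : X, c * ‖x‖ ≤ ‖T x‖ := by
  constructor
  · rintro ⟨u, rfl⟩
    rcases subsingleton_or_nontrivial X with hX | hX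
    · exact ⟨1, one_pos, fun x => by simp [Subsingleton.elim x 0]⟩
    · have hinv : (↑u⁻¹ : X →L[ℂ] X) ≠ 0 := by
        intro h
        have : (1 : X →L[ℂ] X) = 0 := by
          calc (1 : X →L[ℂ] X) = ↑u⁻¹ * ↑u := by rw [u.inv_mul]
          _ = 0 := by rw [h, zero_mul]
        exact one_ne_zero this
      have hpos : 0 < ‖(↑u⁻¹ : X →L[ℂ] X)‖ := norm_pos_iff.mpr hinv
      refine ⟨‖(↑u⁻¹ : X →L[ℂ] X)‖⁻¹, inv_pos.mpr hpos, fun x => ?_⟩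
      have hx : ‖x‖ ≤ ‖(↑u⁻¹ : X →L[ℂ] X)‖ * ‖(↑u : X →L[ℂ] X) x‖ := by
        have : (↑u⁻¹ : X →L[ℂ] X) ((↑u : X →L[ℂ] X) x) = x := by
          have := u.inv_mul
          calc (↑u⁻¹ : X →L[ℂ] X) ((↑u : X →L[ℂ] X) x)
              = ((↑u⁻¹ * ↑u : X →L[ℂ] X)) x := rfl
          _ = x := by rw [this]; rfl
        calc ‖x‖ = ‖(↑u⁻¹ : X →L[ℂ] X) ((↑u : X →L[ℂ] X) x)‖ := by rw [this]
        _ ≤ ‖(↑u⁻¹ : X →L[ℂ] X)‖ * ‖(↑u : X →L[ℂ] X) x‖ :=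
            ContinuousLinearMap.le_opNorm _ _
      rw [inv_mul_le_iff₀ hpos]
      exact hx
  · rintro ⟨c, hc, hbd⟩
    -- T is antilipschitz
    have hanti : AntilipschitzWith (⟨c⁻¹, by positivity⟩ : NNReal) T := by
      apply AntilipschitzWith.of_le_mul_dist
      intro x y
      simp only [dist_eq_norm, ← map_sub]
      have := hbd (x - y)
      change ‖x - y‖ ≤ c⁻¹ * ‖T (x - y)‖
      rw [le_inv_mul_iff₀ hc]
      exact this
    have hinj : Function.Injective T := hanti.injective
    have hclosed : IsClosed (Set.range T) := hanti.isClosed_range T.uniformContinuous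
    -- dense range
    set p : Submodule ℂ X := (LinearMap.range (T : X →ₗ[ℂ] X)).topologicalClosure with hp
    haveI hpC : IsClosed (p : Set X) := Submodule.isClosed_topologicalClosure _
    have hptop : p = ⊤ := by
      by_contra hne
      obtain ⟨x0, hx0⟩ : ∃ x0 : X, x0 ∉ p := by
        by_contra h
        push_neg at h
        exact hne (Submodule.eq_top_iff'.mpr h)
      -- pass to the quotient
      have hmk : (Submodule.Quotient.mk x0 : X ⧸ p) ≠ 0 := by
        intro h
        exact hx0 ((Submodule.Quotient.mk_eq_zero p).mp h)
      obtain ⟨g, hg1, hg2⟩ := exists_dual_vector ℂ (Submodule.Quotient.mk x0 : X ⧸ p) (norm_ne_zero_iff.mpr hmk)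
      have hcont : Continuous (p.mkQ : X → X ⧸ p) := continuous_quot_mk
      let f : X →L[ℂ] ℂ := g.comp ⟨p.mkQ, hcont⟩
      have hfvanish : ∀ y : X, f (T y) = 0 := by
        intro y
        have hmem : T y ∈ p := Submodule.le_topologicalClosure _ ⟨y, rfl⟩
        have : p.mkQ (T y) = 0 := (Submodule.Quotient.mk_eq_zero p).mpr hmem
        simp only [f, ContinuousLinearMap.comp_apply, ContinuousLinearMap.coe_mk']
        rw [this, map_zero]
      obtain ⟨z, hz⟩ := hJsurj f
      have hJTz : J (T z) = 0 := by
        rw [hT z, hz]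
        ext y
        simpa using hfvanish y
      have hTz : T z = 0 := by
        have : ‖T z‖ = 0 := by rw [← hJnorm (T z), hJTz, norm_zero]
        exact norm_eq_zero.mp this
      have hz0 : z = 0 := by
        have := hbd z
        rw [hTz, norm_zero] at this
        have : ‖z‖ ≤ 0 := by nlinarith
        exact norm_eq_zero.mp (le_antisymm this (norm_nonneg z))
      have hf0 : f = 0 := by
        rw [← hz, hz0]
        have : ‖J (0 : X)‖ = 0 := by rw [hJnorm, norm_zero]
        exact norm_eq_zero.mp this
      have : g (Submodule.Quotient.mk x0 : X ⧸ p) = 0 := by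
        have := congrArg (fun φ : X →L[ℂ] ℂ => φ x0) hf0
        simpa [f] using this
      rw [hg2] at this
      exact hmk (norm_eq_zero.mp (Complex.ofReal_eq_zero.mp this))
    -- range of T is all of X
    have hsurj : Function.Surjective T := by
      intro y
      have hy : y ∈ p := hptop ▸ Submodule.mem_top
      have hy2 : y ∈ closure (Set.range ⇑T) := hy
      rw [hclosed.closure_eq] at hy2
      exact hy2
    -- build the inverse
    let e : X ≃L[ℂ] X := ContinuousLinearEquiv.ofBijective T
      (LinearMap.ker_eq_bot.mpr hinj) (LinearMap.range_eq_top.mpr hsurj)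
    refine ⟨⟨T, e.symm.toContinuousLinearMap, ?_, ?_⟩, rfl⟩
    · ext x
      show T (e.symm x) = x
      exact e.apply_symm_apply x
    · ext x
      show e.symm (T x) = x
      exact e.symm_apply_apply x
end

section
/- Let X be a reflexive smooth complex Banach space and T ∈ B(X) a self-adjoint operator. Then μ(Tⁿ) = μ(T)ⁿ for all natural numbers n, where μ denotes the minimum modulus. -/
/-!
Every operator satisfies `μ(T)ⁿ ≤ μ(Tⁿ)`, and if `μ(T) = 0` then `μ(Tⁿ) ≤ ‖Tⁿ⁻¹‖ μ(T) = 0`.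
Otherwise `T` is bounded below, so its range is closed; it is also dense, since a functional
`J w` vanishing on it gives `J (T w) = (J w) ∘ T = 0`, so `T w = 0` and `w = 0`. Hence `T` is
invertible, its inverse `S` is again self-adjoint, and `μ(T) = ‖S‖⁻¹`. Self-adjointness gives
`‖S x‖² = |J x (S² x)| ≤ ‖x‖ ‖S² x‖`, i.e. `‖S²‖ = ‖S‖²`; iterating, `‖S^(2^k)‖ = ‖S‖^(2^k)`,
which forces `‖Sⁿ‖ = ‖S‖ⁿ`. Therefore `μ(Tⁿ) = ‖Sⁿ‖⁻¹ = μ(T)ⁿ`.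
-/

section MinMod

variable {X : Type*} [NormedAddCommGroup X] [NormedSpace ℂ X]

lemma minMod_nonneg (T : X →L[ℂ] X) : 0 ≤ minMod T :=
  Real.sInf_nonneg (by rintro r ⟨x, -, rfl⟩; exact norm_nonneg _)

lemma minMod_of_subsingleton [Subsingleton X] (T : X →L[ℂ] X) : minMod T = 0 := by
  have : {r : ℝ | ∃ x : X, ‖x‖ = 1 ∧ r = ‖T x‖} = ∅ := by
    ext r
    simp [Subsingleton.elim _ (0 : X)]
  rw [minMod, this, Real.sInf_empty]

lemma minMod_le_norm_apply (T : X →L[ℂ] X) {x : X} (hx : ‖x‖ = 1) : minMod T ≤ ‖T x‖ :=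
  csInf_le ⟨0, by rintro r ⟨x, -, rfl⟩; exact norm_nonneg _⟩ ⟨x, hx, rfl⟩

lemma le_minMod [Nontrivial X] {T : X →L[ℂ] X} {c : ℝ} (h : ∀ x : X, ‖x‖ = 1 → c ≤ ‖T x‖) :
    c ≤ minMod T := by
  obtain ⟨u, hu⟩ := exists_norm_eq X zero_le_one
  exact le_csInf ⟨_, u, hu, rfl⟩ (by rintro r ⟨x, hx, rfl⟩; exact h x hx)

lemma minMod_mul_norm_le (T : X →L[ℂ] X) (x : X) : minMod T * ‖x‖ ≤ ‖T x‖ := by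
  rcases eq_or_ne x 0 with rfl | hx
  · simp
  have h := minMod_le_norm_apply T (norm_smul_inv_norm (𝕜 := ℂ) hx)
  rw [map_smul, norm_smul, norm_inv, RCLike.norm_ofReal, abs_norm] at h
  exact (le_inv_mul_iff₀' (norm_pos_iff.mpr hx)).mp h

lemma pow_minMod_mul_norm_le (T : X →L[ℂ] X) (n : ℕ) (x : X) :
    minMod T ^ n * ‖x‖ ≤ ‖(T ^ n) x‖ := by
  induction n generalizing x with
  | zero => simp
  | succ n ih =>
    calc minMod T ^ (n + 1) * ‖x‖ = minMod T ^ n * (minMod T * ‖x‖) := by ring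
      _ ≤ minMod T ^ n * ‖T x‖ :=
        mul_le_mul_of_nonneg_left (minMod_mul_norm_le T x) (pow_nonneg (minMod_nonneg T) n)
      _ ≤ ‖(T ^ (n + 1)) x‖ := by rw [pow_succ]; exact ih (T x)

lemma pow_minMod_le_minMod_pow [Nontrivial X] (T : X →L[ℂ] X) (n : ℕ) :
    minMod T ^ n ≤ minMod (T ^ n) :=
  le_minMod fun x hx ↦ by simpa [hx] using pow_minMod_mul_norm_le T n x

lemma minMod_mul_le_norm_mul_minMod [Nontrivial X] (A B : X →L[ℂ] X) :
    minMod (A * B) ≤ ‖A‖ * minMod B := by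
  rcases (norm_nonneg A).eq_or_lt with hA | hA
  · obtain ⟨u, hu⟩ := exists_norm_eq X zero_le_one
    simpa [norm_eq_zero.mp hA.symm] using minMod_le_norm_apply (A * B) hu
  rw [← div_le_iff₀' hA]
  refine le_minMod fun x hx ↦ (div_le_iff₀' hA).mpr ?_
  exact (minMod_le_norm_apply (A * B) hx).trans (A.le_opNorm (B x))

end MinMod

lemma pow_norm_le_norm_pow_of_le {R : Type*} [NormedRing R] [NormOneClass R] {a : R} {m n : ℕ}
    (hm : ‖a‖ ^ m ≤ ‖a ^ m‖) (hnm : n ≤ m) : ‖a‖ ^ n ≤ ‖a ^ n‖ := by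
  rcases (norm_nonneg a).eq_or_lt with ha | ha
  · rcases n.eq_zero_or_pos with rfl | hn
    · simp
    · simp [← ha, zero_pow hn.ne']
  refine le_of_mul_le_mul_right ?_ (pow_pos ha (m - n))
  calc ‖a‖ ^ n * ‖a‖ ^ (m - n) = ‖a‖ ^ m := by rw [← pow_add, Nat.add_sub_cancel' hnm]
    _ ≤ ‖a ^ m‖ := hm
    _ = ‖a ^ n * a ^ (m - n)‖ := by rw [← pow_add, Nat.add_sub_cancel' hnm]
    _ ≤ ‖a ^ n‖ * ‖a‖ ^ (m - n) :=
      (norm_mul_le _ _).trans (mul_le_mul_of_nonneg_left (norm_pow_le a _) (norm_nonneg _))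

section SelfAdj

variable {X : Type*} [NormedAddCommGroup X] [NormedSpace ℂ X] {J : X → (X →L[ℂ] ℂ)}

lemma IsSelfAdj.pow {T : X →L[ℂ] X} (hT : IsSelfAdj J T) (n : ℕ) : IsSelfAdj J (T ^ n) := by
  induction n with
  | zero => intro x; ext; simp
  | succ n ih =>
    intro x
    calc J ((T ^ (n + 1)) x) = J ((T ^ n) (T x)) := by rw [pow_succ]; rfl
      _ = ((J x).comp T).comp (T ^ n) := by rw [ih (T x), hT x]
      _ = (J x).comp (T ^ (n + 1)) := by rw [pow_succ']; rfl

lemma IsSelfAdj.units_inv {u : (X →L[ℂ] X)ˣ} (hu : IsSelfAdj J u) : IsSelfAdj J ↑u⁻¹ := by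
  set T : X →L[ℂ] X := ↑u
  set S : X →L[ℂ] X := ↑u⁻¹
  intro x
  have hx : T (S x) = x := DFunLike.congr_fun u.mul_inv x
  calc J (S x) = (J (S x)).comp (T * S) := by rw [u.mul_inv]; rfl
    _ = ((J (S x)).comp T).comp S := rfl
    _ = (J x).comp S := by rw [← hu, hx]

lemma IsSelfAdj.norm_apply_sq_le (hJnorm : ∀ x : X, ‖J x‖ = ‖x‖)
    (hJx : ∀ x : X, J x x = (‖x‖ : ℂ) ^ 2) {T : X →L[ℂ] X} (hT : IsSelfAdj J T) (x : X) :
    ‖T x‖ ^ 2 ≤ ‖x‖ * ‖T (T x)‖ :=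
  calc ‖T x‖ ^ 2 = ‖J (T x) (T x)‖ := by simp [hJx]
    _ = ‖J x (T (T x))‖ := by rw [hT x]; rfl
    _ ≤ ‖x‖ * ‖T (T x)‖ := hJnorm x ▸ (J x).le_opNorm (T (T x))

lemma IsSelfAdj.norm_mul_self (hJnorm : ∀ x : X, ‖J x‖ = ‖x‖)
    (hJx : ∀ x : X, J x x = (‖x‖ : ℂ) ^ 2) {T : X →L[ℂ] X} (hT : IsSelfAdj J T) :
    ‖T * T‖ = ‖T‖ ^ 2 := by
  refine le_antisymm (sq ‖T‖ ▸ norm_mul_le T T) ?_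
  have hbound : ‖T‖ ≤ √‖T * T‖ := T.opNorm_le_bound (Real.sqrt_nonneg _) fun x ↦ by
    rw [← Real.sqrt_sq (norm_nonneg x), ← Real.sqrt_mul (norm_nonneg _)]
    apply Real.le_sqrt_of_sq_le
    calc ‖T x‖ ^ 2 ≤ ‖x‖ * ‖T (T x)‖ := hT.norm_apply_sq_le hJnorm hJx x
      _ ≤ ‖x‖ * (‖T * T‖ * ‖x‖) :=
        mul_le_mul_of_nonneg_left ((T * T).le_opNorm x) (norm_nonneg x)
      _ = ‖T * T‖ * ‖x‖ ^ 2 := by ring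
  calc ‖T‖ ^ 2 ≤ √‖T * T‖ ^ 2 := by gcongr
    _ = ‖T * T‖ := Real.sq_sqrt (norm_nonneg _)

lemma IsSelfAdj.norm_pow_two_pow (hJnorm : ∀ x : X, ‖J x‖ = ‖x‖)
    (hJx : ∀ x : X, J x x = (‖x‖ : ℂ) ^ 2) {T : X →L[ℂ] X} (hT : IsSelfAdj J T) (k : ℕ) :
    ‖T ^ 2 ^ k‖ = ‖T‖ ^ 2 ^ k := by
  induction k with
  | zero => simp
  | succ k ih =>
    rw [pow_succ, pow_mul, pow_mul, ← ih, ← (hT.pow _).norm_mul_self hJnorm hJx, sq]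

lemma IsSelfAdj.norm_pow [Nontrivial X] (hJnorm : ∀ x : X, ‖J x‖ = ‖x‖)
    (hJx : ∀ x : X, J x x = (‖x‖ : ℂ) ^ 2) {T : X →L[ℂ] X} (hT : IsSelfAdj J T) (n : ℕ) :
    ‖T ^ n‖ = ‖T‖ ^ n :=
  le_antisymm (norm_pow_le T n)
    (pow_norm_le_norm_pow_of_le (hT.norm_pow_two_pow hJnorm hJx n).ge Nat.lt_two_pow_self.le)

end SelfAdj

lemma Submodule.topologicalClosure_eq_top_of_forall_dual {𝕜 E : Type*} [RCLike 𝕜]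
    [NormedAddCommGroup E] [NormedSpace 𝕜 E] {p : Submodule 𝕜 E}
    (h : ∀ f : StrongDual 𝕜 E, (∀ x ∈ p, f x = 0) → f = 0) : p.topologicalClosure = ⊤ := by
  set q := p.topologicalClosure
  have : IsClosed (q : Set E) := p.isClosed_topologicalClosure
  refine Submodule.eq_top_iff'.mpr fun y ↦ ?_
  by_contra hy
  obtain ⟨g, hg⟩ :=
    SeparatingDual.exists_ne_zero (R := 𝕜) ((Submodule.Quotient.mk_eq_zero q).not.mpr hy)
  have hf := h (g.comp q.mkQL) fun x hx ↦ by
    simp [(Submodule.Quotient.mk_eq_zero q).mpr (p.le_topologicalClosure hx)]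
  exact hg (by simpa using congr($hf y))

section Invertible

variable {X : Type*} [NormedAddCommGroup X] [NormedSpace ℂ X]

lemma minMod_units [Nontrivial X] (u : (X →L[ℂ] X)ˣ) :
    minMod (u : X →L[ℂ] X) = ‖(↑u⁻¹ : X →L[ℂ] X)‖⁻¹ := by
  set T : X →L[ℂ] X := ↑u
  set S : X →L[ℂ] X := ↑u⁻¹
  have hST (x : X) : S (T x) = x := DFunLike.congr_fun u.inv_mul x
  have hTS (x : X) : T (S x) = x := DFunLike.congr_fun u.mul_inv x
  have hS : 0 < ‖S‖ := norm_pos_iff.mpr u⁻¹.ne_zero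
  refine le_antisymm ?_ (le_minMod fun x hx ↦ ?_)
  · rcases (minMod_nonneg T).eq_or_lt with h0 | hpos
    · rw [← h0]; positivity
    rw [le_inv_comm₀ hpos hS]
    refine S.opNorm_le_bound (inv_nonneg.mpr hpos.le) fun y ↦ (le_inv_mul_iff₀ hpos).mpr ?_
    simpa [hTS] using minMod_mul_norm_le T (S y)
  · rw [inv_le_iff_one_le_mul₀' hS]
    calc 1 = ‖S (T x)‖ := by rw [hST, hx]
      _ ≤ ‖S‖ * ‖T x‖ := S.le_opNorm _

lemma IsSelfAdj.isUnit_of_minMod_pos [CompleteSpace X] {J : X → (X →L[ℂ] ℂ)}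
    (hJnorm : ∀ x : X, ‖J x‖ = ‖x‖) (hJsurj : Function.Surjective J) {T : X →L[ℂ] X}
    (hT : IsSelfAdj J T) (hpos : 0 < minMod T) : IsUnit T := by
  have hanti : AntilipschitzWith ⟨(minMod T)⁻¹, inv_nonneg.mpr hpos.le⟩ T :=
    T.antilipschitz_of_bound fun x ↦ (le_inv_mul_iff₀ hpos).mpr (minMod_mul_norm_le T x)
  refine ContinuousLinearMap.isUnit_iff_bijective.mpr
    (T.bijective_iff_dense_range_and_antilipschitz.mpr ⟨?_, _, hanti⟩)
  refine Submodule.topologicalClosure_eq_top_of_forall_dual fun f hf ↦ ?_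
  obtain ⟨w, rfl⟩ := hJsurj f
  have hJTw : J (T w) = 0 := by
    rw [hT w]
    ext z
    exact hf (T z) ⟨z, rfl⟩
  have hTw : T w = 0 := norm_eq_zero.mp (by rw [← hJnorm, hJTw, norm_zero])
  rw [hanti.injective (hTw.trans (map_zero T).symm)]
  exact norm_eq_zero.mp (by rw [hJnorm, norm_zero])

end Invertible

/-- For a self-adjoint operator T on a reflexive smooth complex
Banach space, μ(Tⁿ) = μ(T)ⁿ for all natural numbers n. -/
theorem minMod_pow_eq_pow_minMod
    {X : Type*} [NormedAddCommGroup X] [NormedSpace ℂ X] [CompleteSpace X]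
    (J : X → (X →L[ℂ] ℂ))
    (hJnorm : ∀ x : X, ‖J x‖ = ‖x‖)
    (hJx : ∀ x : X, J x x = (‖x‖ : ℂ) ^ 2)
    (hJsurj : Function.Surjective J)
    (T : X →L[ℂ] X) (hT : IsSelfAdj J T) :
    ∀ n : ℕ, 1 ≤ n → minMod (T ^ n) = (minMod T) ^ n := by
  intro n hn
  rcases subsingleton_or_nontrivial X with hX | hX
  · simp [minMod_of_subsingleton, zero_pow (by omega : n ≠ 0)]
  rcases (minMod_nonneg T).eq_or_lt with h0 | hpos
  · obtain ⟨m, rfl⟩ := Nat.exists_eq_add_of_le' hn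
    refine le_antisymm ?_ (pow_minMod_le_minMod_pow T _)
    simpa [pow_succ, ← h0] using minMod_mul_le_norm_mul_minMod (T ^ m) T
  obtain ⟨u, rfl⟩ := hT.isUnit_of_minMod_pos hJnorm hJsurj hpos
  calc minMod ((u : X →L[ℂ] X) ^ n) = ‖(↑(u ^ n)⁻¹ : X →L[ℂ] X)‖⁻¹ := by
        rw [← minMod_units, Units.val_pow_eq_pow_val]
    _ = ‖(↑u⁻¹ : X →L[ℂ] X)‖⁻¹ ^ n := by
        rw [← inv_pow, Units.val_pow_eq_pow_val, hT.units_inv.norm_pow hJnorm hJx, inv_pow]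
    _ = minMod (u : X →L[ℂ] X) ^ n := by rw [minMod_units]
end

section
/- Let X be a reflexive smooth complex Banach space and T ∈ B(X). Then T is unitary (i.e., ‖Tx‖ = ‖T'(Jx)‖ = ‖x‖ for all x ∈ X) if and only if T is a surjective isometry. -/
/-- On a reflexive smooth complex Banach space (J surjective),
T is unitary (‖Tx‖ = ‖T'(Jx)‖ = ‖x‖ for all x) iff T is a surjective isometry. -/
theorem unitary_iff_surjective_isometry
    {X : Type*} [NormedAddCommGroup X] [NormedSpace ℂ X] [CompleteSpace X]
    (J : X → (X →L[ℂ] ℂ))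
    (hJnorm : ∀ x : X, ‖J x‖ = ‖x‖)
    (hJx : ∀ x : X, J x x = (‖x‖ : ℂ) ^ 2)
    (hJsurj : Function.Surjective J)
    (T : X →L[ℂ] X) :
    (∀ x : X, ‖T x‖ = ‖(J x).comp T‖ ∧ ‖T x‖ = ‖x‖) ↔
      (Function.Surjective T ∧ ∀ x : X, ‖T x‖ = ‖x‖) := by
  constructor
  · intro h
    have hiso : ∀ x : X, ‖T x‖ = ‖x‖ := fun x => (h x).2
    refine ⟨?_, hiso⟩
    -- T is antilipschitz, so its range is closed
    have hanti : AntilipschitzWith 1 T := by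
      refine AntilipschitzWith.of_le_mul_dist fun x y => ?_
      simp only [dist_eq_norm, NNReal.coe_one, one_mul, ← map_sub]
      exact (hiso (x - y)).ge
    have hclosed : IsClosed ((LinearMap.range (T : X →ₗ[ℂ] X) : Submodule ℂ X) : Set X) := by
      simpa [LinearMap.coe_range] using hanti.isClosed_range T.uniformContinuous
    set p : Submodule ℂ X := LinearMap.range (T : X →ₗ[ℂ] X) with hp
    by_contra hsurj
    obtain ⟨y, hy⟩ : ∃ y : X, y ∉ p := by
      by_contra hall
      push_neg at hall
      exact hsurj fun z => (hall z)
    -- pass to the quotient and use Hahn-Banach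
    haveI : IsClosed (p : Set X) := hclosed
    have hyne : (Submodule.Quotient.mk y : X ⧸ p) ≠ 0 := by
      simpa [Submodule.Quotient.mk_eq_zero] using hy
    obtain ⟨g, hgnorm, hgy⟩ := exists_dual_vector ℂ (Submodule.Quotient.mk y : X ⧸ p) (norm_ne_zero_iff.mpr hyne)
    -- continuous linear quotient map
    let mkC : X →L[ℂ] X ⧸ p :=
      p.mkQ.mkContinuous 1 (fun x => by
        simpa using Submodule.Quotient.norm_mk_le p x)
    let f : X →L[ℂ] ℂ := g.comp mkC
    obtain ⟨x₀, hx₀⟩ := hJsurj f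
    have hcomp0 : (J x₀).comp T = 0 := by
      ext z
      have hz : (T z : X) ∈ p := ⟨z, rfl⟩
      have : (Submodule.Quotient.mk (T z) : X ⧸ p) = 0 := by
        simpa [Submodule.Quotient.mk_eq_zero] using hz
      simp only [ContinuousLinearMap.comp_apply, hx₀, ContinuousLinearMap.zero_apply, f, mkC]
      simp only [LinearMap.mkContinuous_apply, Submodule.mkQ_apply]
      rw [this]
      simp
    have hx₀0 : x₀ = 0 := by
      have h1 := (h x₀).1
      have h2 := (h x₀).2
      rw [hcomp0] at h1
      simp only [norm_zero] at h1
      have : ‖x₀‖ = 0 := by rw [← h2, h1]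
      exact norm_eq_zero.mp this
    -- then f = J 0 = 0, contradicting f y ≠ 0
    have hf0 : f = 0 := by
      rw [← hx₀, hx₀0]
      have : ‖J (0 : X)‖ = 0 := by simpa using hJnorm 0
      exact norm_eq_zero.mp this
    have : f y = g (Submodule.Quotient.mk y) := by
      simp [f, mkC]
    rw [hf0] at this
    rw [hgy] at this
    have : (‖(Submodule.Quotient.mk y : X ⧸ p)‖ : ℂ) = 0 := by
      simpa using this.symm
    exact hyne (norm_eq_zero.mp (by exact_mod_cast this))
  · rintro ⟨hsurj, hiso⟩
    intro x
    refine ⟨?_, hiso x⟩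
    rw [hiso x]
    refine le_antisymm ?_ ?_
    · rcases eq_or_ne x 0 with rfl | hx
      · simp only [norm_zero]; positivity
      obtain ⟨z, hz⟩ := hsurj x
      have hznorm : ‖z‖ = ‖x‖ := by rw [← hiso z, hz]
      have key : ‖x‖ ^ 2 ≤ ‖(J x).comp T‖ * ‖x‖ := by
        have : ‖(J x).comp T z‖ ≤ ‖(J x).comp T‖ * ‖z‖ := ((J x).comp T).le_opNorm z
        rw [hznorm] at this
        calc ‖x‖ ^ 2 = ‖((‖x‖ : ℂ) ^ 2)‖ := by
              simp [norm_pow]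
          _ = ‖(J x) x‖ := by rw [hJx]
          _ = ‖(J x).comp T z‖ := by rw [← hz]; rfl
          _ ≤ ‖(J x).comp T‖ * ‖x‖ := this
      have hxpos : (0 : ℝ) < ‖x‖ := norm_pos_iff.mpr hx
      nlinarith [key]
    · refine ContinuousLinearMap.opNorm_le_bound _ (norm_nonneg x) fun z => ?_
      calc ‖(J x).comp T z‖ = ‖(J x) (T z)‖ := rfl
        _ ≤ ‖J x‖ * ‖T z‖ := (J x).le_opNorm _
        _ = ‖x‖ * ‖z‖ := by rw [hJnorm, hiso]
end

section
/- Let X be a separable smooth complex Banach space and T ∈ B(X) a self-adjoint operator. Then the set of eigenvalues of T is countable. -/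
open scoped ComplexConjugate

section
variable {X : Type*} [NormedAddCommGroup X] [NormedSpace ℂ X]
    (J : X → (X →L[ℂ] ℂ)) (T : X →L[ℂ] X)

lemma Jpow (hT : IsSelfAdj J T) : ∀ (n : ℕ) (x y : X),
    J ((T ^ n) x) y = J x ((T ^ n) y) := by
  intro n
  induction n with
  | zero => intro x y; simp
  | succ n ih =>
    intro x y
    have h1 : (T ^ (n+1)) x = (T ^ n) (T x) := by
      rw [pow_succ]; rfl
    have h2 : (T ^ (n+1)) y = T ((T ^ n) y) := by
      rw [pow_succ']; rfl
    rw [h1, h2, ih (T x) y]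
    have := congrArg (fun f : X →L[ℂ] ℂ => f ((T ^ n) y)) (hT x)
    simpa using this

lemma eigvec_pow {lam : ℂ} {x : X} (hx : T x = lam • x) (n : ℕ) :
    (T ^ n) x = lam ^ n • x := by
  induction n with
  | zero => simp
  | succ n ih =>
    have : (T ^ (n+1)) x = T ((T ^ n) x) := by rw [pow_succ']; rfl
    rw [this, ih, map_smul, hx, smul_smul, mul_comm, ← pow_succ']

end

lemma exists_re_le_half' (ω c : ℂ) (hω : ‖ω‖ = 1) (hω1 : ω ≠ 1) :
    ∃ n : ℕ, (ω ^ n * c).re ≤ 1 / 2 := by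
  by_contra h
  push_neg at h
  obtain ⟨N, hN⟩ := exists_nat_gt (4 * ‖c‖ / ‖ω - 1‖ + 1)
  have hsum : (∑ n ∈ Finset.range N, ω ^ n) = (ω ^ N - 1) / (ω - 1) :=
    geom_sum_eq hω1 N
  have hpos : 0 < ‖ω - 1‖ := by simpa [sub_ne_zero] using hω1
  have hbound : ‖∑ n ∈ Finset.range N, ω ^ n * c‖ ≤ 2 * ‖c‖ / ‖ω - 1‖ := by
    rw [← Finset.sum_mul, hsum, norm_mul, norm_div, div_mul_eq_mul_div]
    have h1 : ‖ω ^ N - 1‖ ≤ 2 := by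
      calc ‖ω ^ N - 1‖ ≤ ‖ω ^ N‖ + ‖(1:ℂ)‖ := norm_sub_le _ _
        _ = 2 := by simp [norm_pow, hω]; norm_num
    gcongr
  have hre : (N : ℝ) / 2 ≤ (∑ n ∈ Finset.range N, ω ^ n * c).re := by
    rw [Complex.re_sum]
    calc (N:ℝ)/2 = ∑ _n ∈ Finset.range N, (1:ℝ)/2 := by simp; ring
      _ ≤ _ := Finset.sum_le_sum fun n _ => (h n).le
  have hre2 : (N : ℝ) / 2 ≤ 2 * ‖c‖ / ‖ω - 1‖ :=
    hre.trans ((Complex.re_le_norm _).trans (by simpa using hbound))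
  have h4 : (N : ℝ) ≤ 4 * ‖c‖ / ‖ω - 1‖ := by
    calc (N:ℝ) = 2 * ((N:ℝ)/2) := by ring
      _ ≤ 2 * (2 * ‖c‖ / ‖ω - 1‖) := by linarith
      _ = 4 * ‖c‖ / ‖ω - 1‖ := by ring
  linarith

section
variable {X : Type*} [NormedAddCommGroup X] [NormedSpace ℂ X]
    {J : X → (X →L[ℂ] ℂ)} {T : X →L[ℂ] X}

lemma sep_lemma
    (hJnorm : ∀ x : X, ‖J x‖ = ‖x‖)
    (hJx : ∀ x : X, J x x = (‖x‖ : ℂ) ^ 2)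
    (hT : IsSelfAdj J T)
    {lam mu : ℂ} {x y : X} (hx : ‖x‖ = 1) (hy : ‖y‖ = 1)
    (hTx : T x = lam • x) (hTy : T y = mu • y)
    (hle : ‖lam‖ ≤ ‖mu‖) (hne : lam ≠ mu) (hconj : mu ≠ conj lam) :
    1/2 ≤ ‖x - y‖ := by
  set c : ℂ := J x y with hc
  -- key identity : J (lam^n • x) y = mu^n * c
  have key : ∀ n : ℕ, J (lam ^ n • x) y = mu ^ n * c := by
    intro n
    rw [← eigvec_pow T hTx n, Jpow J T hT n x y, eigvec_pow T hTy n, map_smul]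
    rfl
  -- norm bound : ‖mu^n * c‖ ≤ ‖lam‖^n
  have keybd : ∀ n : ℕ, ‖mu‖ ^ n * ‖c‖ ≤ ‖lam‖ ^ n := by
    intro n
    have h1 : ‖J (lam ^ n • x) y‖ ≤ ‖J (lam ^ n • x)‖ * ‖y‖ :=
      (J (lam ^ n • x)).le_opNorm y
    rw [key n, hJnorm, norm_smul, hx, hy, norm_pow] at h1
    simpa [norm_mul, norm_pow] using h1
  -- the easy estimate when c = 0
  have easy : c = 0 → 1/2 ≤ ‖x - y‖ := by
    intro hc0
    have h1 : J x (x - y) = 1 := by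
      rw [map_sub, hJx x, hx, ← hc, hc0]; simp
    have h2 : ‖J x (x - y)‖ ≤ ‖J x‖ * ‖x - y‖ := (J x).le_opNorm _
    rw [h1, hJnorm, hx, one_mul] at h2
    simpa using h2.trans' (by norm_num)
  rcases lt_or_eq_of_le hle with hlt | heq
  · -- |lam| < |mu| : c = 0
    apply easy
    by_contra hc0
    have hcpos : 0 < ‖c‖ := norm_pos_iff.mpr hc0
    have hmupos : 0 < ‖mu‖ := lt_of_le_of_lt (norm_nonneg _) hlt
    have hr : ∀ n : ℕ, ‖c‖ ≤ (‖lam‖ / ‖mu‖) ^ n := by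
      intro n
      rw [div_pow, le_div_iff₀ (by positivity)]
      calc ‖c‖ * ‖mu‖ ^ n = ‖mu‖ ^ n * ‖c‖ := by ring
        _ ≤ ‖lam‖ ^ n := keybd n
    have hlim : Filter.Tendsto (fun n : ℕ => (‖lam‖ / ‖mu‖) ^ n)
        Filter.atTop (nhds 0) := by
      apply tendsto_pow_atTop_nhds_zero_of_lt_one (by positivity)
      rw [div_lt_one hmupos]; exact hlt
    have := ge_of_tendsto hlim (Filter.Eventually.of_forall hr)
    linarith
  · -- |lam| = |mu|, both nonzero
    have hlam0 : lam ≠ 0 := by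
      rintro rfl
      have : mu = 0 := by simpa using heq.symm
      exact hne (this ▸ rfl)
    set ω : ℂ := mu / conj lam with hω
    have habs : ‖ω‖ = 1 := by
      rw [hω, norm_div, RCLike.norm_conj, ← heq, div_self]
      simpa using hlam0
    have hω1 : ω ≠ 1 := by
      rw [hω, Ne, div_eq_one_iff_eq (by simpa using hlam0)]
      exact hconj
    obtain ⟨n, hn⟩ := exists_re_le_half' ω c habs hω1
    -- φ_n x = (conj lam)^n
    have hφx : J (lam ^ n • x) x = conj lam ^ n := by
      have h1 : J (lam ^ n • x) (lam ^ n • x) = (‖lam ^ n • x‖ : ℂ) ^ 2 :=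
        hJx _
      rw [map_smul] at h1
      have h2 : ((‖lam ^ n • x‖ : ℝ) : ℂ) ^ 2 = lam ^ n * conj (lam ^ n) := by
        rw [norm_smul, hx, mul_one, Complex.mul_conj]
        norm_cast
        rw [← Complex.sq_norm]
      have hpow : lam ^ n ≠ 0 := pow_ne_zero _ hlam0
      have := h1.trans h2
      rw [smul_eq_mul] at this
      have := mul_left_cancel₀ hpow this
      rw [this, map_pow]
    -- main estimate
    have hφ : J (lam ^ n • x) (x - y) = conj lam ^ n - mu ^ n * c := by
      rw [map_sub, hφx, key n]
    have hbd : ‖J (lam ^ n • x) (x - y)‖ ≤ ‖lam‖ ^ n * ‖x - y‖ := by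
      have := (J (lam ^ n • x)).le_opNorm (x - y)
      rwa [hJnorm, norm_smul, hx, mul_one, norm_pow] at this
    rw [hφ] at hbd
    have hfact : conj lam ^ n - mu ^ n * c = conj lam ^ n * (1 - ω ^ n * c) := by
      rw [hω, div_pow, mul_sub, mul_one]
      congr 1
      rw [mul_comm (mu ^ n) c, ← mul_assoc, mul_comm _ (mu^n / _), div_mul_cancel₀]
      · ring
      · exact pow_ne_zero _ (by simpa using hlam0)
    rw [hfact, norm_mul, norm_pow, RCLike.norm_conj] at hbd
    have hlampos : (0:ℝ) < ‖lam‖ ^ n := by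
      have : (0:ℝ) < ‖lam‖ := norm_pos_iff.mpr hlam0
      positivity
    have hkey : ‖(1 : ℂ) - ω ^ n * c‖ ≤ ‖x - y‖ := by
      have := (mul_le_mul_iff_right₀ hlampos).mp hbd
      exact this
    refine le_trans ?_ hkey
    calc (1:ℝ)/2 ≤ ((1:ℂ) - ω ^ n * c).re := by
          simp only [Complex.sub_re, Complex.one_re]; linarith
      _ ≤ ‖(1:ℂ) - ω ^ n * c‖ := Complex.re_le_norm _

end

/-- The eigenspectrum of a self-adjoint operator on a separable
smooth complex Banach space is countable. -/
theorem eigenspectrum_countable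
    {X : Type*} [NormedAddCommGroup X] [NormedSpace ℂ X] [CompleteSpace X]
    [TopologicalSpace.SeparableSpace X]
    (J : X → (X →L[ℂ] ℂ))
    (hJnorm : ∀ x : X, ‖J x‖ = ‖x‖)
    (hJx : ∀ x : X, J x x = (‖x‖ : ℂ) ^ 2)
    (T : X →L[ℂ] X) (hT : IsSelfAdj J T) :
    {lam : ℂ | ∃ x : X, x ≠ 0 ∧ T x = lam • x}.Countable := by
  set E := {lam : ℂ | ∃ x : X, x ≠ 0 ∧ T x = lam • x} with hE
  -- choose unit eigenvectors
  have hEvec : ∀ lam ∈ E, ∃ u : X, ‖u‖ = 1 ∧ T u = lam • u := by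
    rintro lam ⟨x, hx0, hTx⟩
    refine ⟨(‖x‖:ℂ)⁻¹ • x, ?_, ?_⟩
    · rw [norm_smul]
      have : ‖x‖ ≠ 0 := norm_ne_zero_iff.mpr hx0
      simp [this]
    · rw [map_smul, hTx, smul_comm]
  choose! u hu1 hu2 using hEvec
  -- separation of eigenvectors for suitable pairs
  have hsep : ∀ lam ∈ E, ∀ mu ∈ E, lam ≠ mu → mu ≠ (starRingEnd ℂ) lam →
      lam ≠ (starRingEnd ℂ) mu → 1/2 ≤ ‖u lam - u mu‖ := by
    intro lam hlam mu hmu hne hc1 hc2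
    rcases le_total ‖lam‖ ‖mu‖ with h | h
    · exact sep_lemma hJnorm hJx hT (hu1 lam hlam) (hu1 mu hmu)
        (hu2 lam hlam) (hu2 mu hmu) h hne hc1
    · rw [norm_sub_rev]
      exact sep_lemma hJnorm hJx hT (hu1 mu hmu) (hu1 lam hlam)
        (hu2 mu hmu) (hu2 lam hlam) h hne.symm hc2
  -- a half-plane piece is countable
  have half : ∀ (P : ℂ → Prop),
      (∀ lam mu, P lam → P mu → mu = (starRingEnd ℂ) lam → lam = mu) →
      {lam ∈ E | P lam}.Countable := by
    intro P hP
    have hdisj : {lam ∈ E | P lam}.PairwiseDisjoint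
        (fun lam => Metric.ball (u lam) (4⁻¹)) := by
      rintro lam ⟨hlamE, hlamP⟩ mu ⟨hmuE, hmuP⟩ hne
      have h1 : mu ≠ (starRingEnd ℂ) lam := by
        intro h; exact hne (hP lam mu hlamP hmuP h)
      have h2 : lam ≠ (starRingEnd ℂ) mu := by
        intro h
        exact hne (hP mu lam hmuP hlamP h).symm
      have hd := hsep lam hlamE mu hmuE hne h1 h2
      apply Metric.ball_disjoint_ball
      rw [dist_eq_norm]
      linarith
    exact hdisj.countable_of_isOpen (fun i _ => Metric.isOpen_ball)
      (fun i _ => ⟨u i, by simp⟩)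
  have hsplit : E = {lam ∈ E | 0 ≤ lam.im} ∪ {lam ∈ E | lam.im ≤ 0} := by
    ext lam
    simp only [Set.mem_union, Set.mem_setOf_eq, Set.mem_sep_iff]
    constructor
    · intro h
      rcases le_total 0 lam.im with h' | h'
      · exact Or.inl ⟨h, h'⟩
      · exact Or.inr ⟨h, h'⟩
    · rintro (⟨h, _⟩ | ⟨h, _⟩) <;> exact h
  rw [hsplit]
  apply Set.Countable.union
  · apply half
    intro lam mu hl hm h
    have : mu.im = -lam.im := by rw [h]; simp
    have hmu0 : mu.im = 0 := by linarith
    have hlam0 : lam.im = 0 := by linarith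
    apply Complex.ext
    · rw [h]; simp
    · rw [hmu0, hlam0]
  · apply half
    intro lam mu hl hm h
    have : mu.im = -lam.im := by rw [h]; simp
    have hmu0 : mu.im = 0 := by linarith
    have hlam0 : lam.im = 0 := by linarith
    apply Complex.ext
    · rw [h]; simp
    · rw [hmu0, hlam0]
end
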